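/- Under the modular setup below, for every β₀ ∈ (0, ∞) and every h* ≥ 0 there exists a finite constant C (depending on μ, A, β₀, h*) such that: (i) ∫_{ {(h,h̄) : h ≥ h*} } e^{−βh − β̄ h̄} dμ(h, h̄) ≤ C · β̄^{−1/2} · e^{4π²A/β̄ − h* β} for all β ≥ β₀ ≥ β̄ > 0; and (ii) ∫_{ {(h,h̄) : h̄ ≥ h*} } e^{−βh − β̄ h̄} dμ(h, h̄) ≤ C · β^{−1/2} · e^{4π²A/β − h* β̄} for all β̄ ≥ β₀ ≥ β > 0. -/

import Mathlib

open MeasureTheory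

/-- The reduced partition function
`Z̃(β, β̄) = (1-e^{-β})(1-e^{-β̄}) + ∫ e^{-βh - β̄h̄} dμ(h,h̄)`. -/
noncomputable def Ztil (μ : Measure (ℝ × ℝ)) (β βb : ℝ) : ℝ :=
  (1 - Real.exp (-β)) * (1 - Real.exp (-βb)) +
    ∫ p : ℝ × ℝ, Real.exp (-β * p.1 - βb * p.2) ∂μ

/-- The modular crossing kernel
`K(β, β̄) = (2π/√(ββ̄)) exp(4π²A/β + 4π²A/β̄ - Aβ - Aβ̄)`. -/
noncomputable def Kker (A β βb : ℝ) : ℝ :=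
  2 * Real.pi / Real.sqrt (β * βb) *
    Real.exp (4 * Real.pi ^ 2 * A / β + 4 * Real.pi ^ 2 * A / βb - A * β - A * βb)

open Real

/-!
Fix `β̄ ≤ β₀ ≤ β`. On `{h ≥ h*}` one has `e^{-βh} ≤ e^{h*(β₀-β)} e^{-β₀h}`, so the partial integral
is at most `e^{h*(β₀-β)} Z̃(β₀, β̄)`. Modular invariance turns this into
`K(β₀, β̄) Z̃(4π²/β₀, 4π²/β̄)`; as `h̄ ≥ 0` on the support and `4π²/β̄ ≥ 4π²/β₀`, the last factor is
at most `1 + ∫ e^{-4π²(h+h̄)/β₀} dμ`, and `K(β₀, β̄) ≤ const · β̄^{-1/2} e^{4π²A/β̄}` since `A ≥ 0`.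
The bound over `{h̄ ≥ h*}` is the same bound for the measure reflected in the diagonal, which is
again modular invariant because `K` is symmetric.
-/

lemma ae_le_fst_and_le_snd {μ : Measure (ℝ × ℝ)} {T : ℝ}
    (h : μ {p : ℝ × ℝ | p.1 < T ∨ p.2 < T} = 0) : ∀ᵐ p ∂μ, T ≤ p.1 ∧ T ≤ p.2 := by
  rw [ae_iff]
  simpa only [not_and_or, not_le] using h

lemma Kker_comm (A β βb : ℝ) : Kker A β βb = Kker A βb β := by
  unfold Kker
  rw [mul_comm β βb]
  ring_nf

lemma Kker_nonneg (A β βb : ℝ) : 0 ≤ Kker A β βb := by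
  unfold Kker
  positivity

lemma Kker_le {A β βb : ℝ} (hA : 0 ≤ A) (hβ : 0 < β) (hβb : 0 < βb) :
    Kker A β βb ≤
      2 * π / √β * exp (4 * π ^ 2 * A / β) * βb ^ (-(1 : ℝ) / 2) * exp (4 * π ^ 2 * A / βb) := by
  have hrpow : βb ^ (-(1 : ℝ) / 2) = (√βb)⁻¹ := by
    rw [neg_div, rpow_neg hβb.le, ← sqrt_eq_rpow]
  calc Kker A β βb
      ≤ 2 * π / √(β * βb) * exp (4 * π ^ 2 * A / β + 4 * π ^ 2 * A / βb) := by
        unfold Kker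
        gcongr
        nlinarith
    _ = _ := by
        rw [hrpow, sqrt_mul hβ.le, exp_add]
        field_simp

lemma exp_swap (β βb : ℝ) (p : ℝ × ℝ) :
    exp (-β * p.swap.1 - βb * p.swap.2) = exp (-βb * p.1 - β * p.2) := by
  rw [Prod.fst_swap, Prod.snd_swap, sub_eq_neg_add]
  ring_nf

lemma Ztil_map_swap (μ : Measure (ℝ × ℝ)) (β βb : ℝ) :
    Ztil (μ.map Prod.swap) β βb = Ztil μ βb β := by
  rw [Ztil, Ztil, integral_map measurable_swap.aemeasurable
    (by fun_prop : Continuous _).aestronglyMeasurable]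
  simp only [exp_swap]
  ring

lemma integrable_exp_map_swap {μ : Measure (ℝ × ℝ)} {β βb : ℝ}
    (h : Integrable (fun p : ℝ × ℝ => exp (-βb * p.1 - β * p.2)) μ) :
    Integrable (fun p : ℝ × ℝ => exp (-β * p.1 - βb * p.2)) (μ.map Prod.swap) := by
  rw [integrable_map_measure (by fun_prop : Continuous _).aestronglyMeasurable
    measurable_swap.aemeasurable]
  simpa only [Function.comp_def, exp_swap] using h

lemma setIntegral_snd_ge_eq_map_swap (μ : Measure (ℝ × ℝ)) (β βb c : ℝ) :
    ∫ p in {p : ℝ × ℝ | c ≤ p.2}, exp (-β * p.1 - βb * p.2) ∂μ =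
      ∫ p in {p : ℝ × ℝ | c ≤ p.1}, exp (-βb * p.1 - β * p.2) ∂(μ.map Prod.swap) := by
  rw [setIntegral_map (measurableSet_le measurable_const measurable_fst)
    (by fun_prop : Continuous _).aestronglyMeasurable measurable_swap.aemeasurable]
  simp only [exp_swap]
  rfl

lemma integral_le_Ztil (μ : Measure (ℝ × ℝ)) {β βb : ℝ} (hβ : 0 ≤ β) (hβb : 0 ≤ βb) :
    ∫ p, exp (-β * p.1 - βb * p.2) ∂μ ≤ Ztil μ β βb := by
  have : 0 ≤ (1 - exp (-β)) * (1 - exp (-βb)) :=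
    mul_nonneg (sub_nonneg.2 (exp_le_one_iff.2 (neg_nonpos.2 hβ)))
      (sub_nonneg.2 (exp_le_one_iff.2 (neg_nonpos.2 hβb)))
  rw [Ztil]
  linarith

lemma Ztil_le_one_add_integral {μ : Measure (ℝ × ℝ)} (hsnd : ∀ᵐ p ∂μ, 0 ≤ p.2) {s t : ℝ}
    (hs : 0 ≤ s) (hst : s ≤ t) (hint : Integrable (fun p : ℝ × ℝ => exp (-s * p.1 - s * p.2)) μ) :
    Ztil μ s t ≤ 1 + ∫ p, exp (-s * p.1 - s * p.2) ∂μ := by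
  have hprod : (1 - exp (-s)) * (1 - exp (-t)) ≤ 1 :=
    mul_le_one₀ (by linarith [exp_pos (-s)])
      (sub_nonneg.2 (exp_le_one_iff.2 (neg_nonpos.2 (hs.trans hst))))
      (by linarith [exp_pos (-t)])
  have hmono : ∫ p, exp (-s * p.1 - t * p.2) ∂μ ≤ ∫ p, exp (-s * p.1 - s * p.2) ∂μ :=
    integral_mono_of_nonneg (ae_of_all _ fun p => (exp_pos _).le) hint
      (hsnd.mono fun p hp => exp_le_exp.2 (by nlinarith))
  rw [Ztil]
  linarith

lemma setIntegral_fst_ge_le_exp_mul_integral {μ : Measure (ℝ × ℝ)} {β₀ β βb : ℝ} (c : ℝ)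
    (hβ : β₀ ≤ β) (hint : Integrable (fun p : ℝ × ℝ => exp (-β₀ * p.1 - βb * p.2)) μ) :
    ∫ p in {p : ℝ × ℝ | c ≤ p.1}, exp (-β * p.1 - βb * p.2) ∂μ ≤
      exp (c * (β₀ - β)) * ∫ p, exp (-β₀ * p.1 - βb * p.2) ∂μ := by
  have hS : MeasurableSet {p : ℝ × ℝ | c ≤ p.1} := measurableSet_le measurable_const measurable_fst
  calc ∫ p in {p : ℝ × ℝ | c ≤ p.1}, exp (-β * p.1 - βb * p.2) ∂μ
      ≤ ∫ p in {p : ℝ × ℝ | c ≤ p.1}, exp (c * (β₀ - β)) * exp (-β₀ * p.1 - βb * p.2) ∂μ := by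
        refine integral_mono_of_nonneg (ae_of_all _ fun p => (exp_pos _).le)
          (hint.const_mul _).integrableOn (ae_restrict_of_forall_mem hS fun p hp => ?_)
        dsimp only
        rw [← exp_add]
        exact exp_le_exp.2 (by nlinarith [show c ≤ p.1 from hp])
    _ = exp (c * (β₀ - β)) * ∫ p in {p : ℝ × ℝ | c ≤ p.1}, exp (-β₀ * p.1 - βb * p.2) ∂μ :=
        integral_const_mul _ _
    _ ≤ exp (c * (β₀ - β)) * ∫ p, exp (-β₀ * p.1 - βb * p.2) ∂μ :=
        mul_le_mul_of_nonneg_left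
          (setIntegral_le_integral hint (ae_of_all _ fun p => (exp_pos _).le)) (exp_pos _).le

theorem exists_setIntegral_fst_ge_le {A : ℝ} (hA : 0 ≤ A) {μ : Measure (ℝ × ℝ)}
    (hsnd : ∀ᵐ p ∂μ, 0 ≤ p.2)
    (hint : ∀ β βb : ℝ, 0 < β → 0 < βb →
      Integrable (fun p : ℝ × ℝ => exp (-β * p.1 - βb * p.2)) μ)
    (hmod : ∀ β βb : ℝ, 0 < β → 0 < βb →
      Ztil μ β βb = Kker A β βb * Ztil μ (4 * π ^ 2 / β) (4 * π ^ 2 / βb))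
    {β₀ : ℝ} (hβ₀ : 0 < β₀) (c : ℝ) :
    ∃ C : ℝ, ∀ β βb : ℝ, 0 < βb → βb ≤ β₀ → β₀ ≤ β →
      ∫ p in {p : ℝ × ℝ | c ≤ p.1}, exp (-β * p.1 - βb * p.2) ∂μ ≤
        C * βb ^ (-(1 : ℝ) / 2) * exp (4 * π ^ 2 * A / βb - c * β) := by
  set s := 4 * π ^ 2 / β₀
  have hs : 0 < s := by positivity
  set M := 1 + ∫ p, exp (-s * p.1 - s * p.2) ∂μ
  have hM : 0 ≤ M := by
    have : 0 ≤ ∫ p, exp (-s * p.1 - s * p.2) ∂μ := integral_nonneg fun p => (exp_pos _).le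
    positivity
  refine ⟨exp (c * β₀) * (2 * π / √β₀ * exp (4 * π ^ 2 * A / β₀)) * M,
    fun β βb hβb hβbβ₀ hβ₀β => ?_⟩
  have hst : s ≤ 4 * π ^ 2 / βb := div_le_div_of_nonneg_left (by positivity) hβb hβbβ₀
  have hZ : Ztil μ β₀ βb ≤ Kker A β₀ βb * M := by
    rw [hmod β₀ βb hβ₀ hβb]
    exact mul_le_mul_of_nonneg_left (Ztil_le_one_add_integral hsnd hs.le hst (hint s s hs hs))
      (Kker_nonneg _ _ _)
  calc ∫ p in {p : ℝ × ℝ | c ≤ p.1}, exp (-β * p.1 - βb * p.2) ∂μ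
      ≤ exp (c * (β₀ - β)) * ∫ p, exp (-β₀ * p.1 - βb * p.2) ∂μ :=
        setIntegral_fst_ge_le_exp_mul_integral c hβ₀β (hint β₀ βb hβ₀ hβb)
    _ ≤ exp (c * (β₀ - β)) * (Kker A β₀ βb * M) := by
        gcongr
        exact (integral_le_Ztil μ hβ₀.le hβb.le).trans hZ
    _ ≤ exp (c * (β₀ - β)) * ((2 * π / √β₀ * exp (4 * π ^ 2 * A / β₀) * βb ^ (-(1 : ℝ) / 2) *
          exp (4 * π ^ 2 * A / βb)) * M) := by
        gcongr
        exact Kker_le hA hβ₀ hβb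
    _ = _ := by
        simp only [mul_sub, exp_sub]
        ring

theorem stmt12_general (A T : ℝ) (hA : 0 < A) (hT : 0 < T) (μ : Measure (ℝ × ℝ))
    (hsupp : μ {p : ℝ × ℝ | p.1 < T ∨ p.2 < T} = 0)
    (hint : ∀ β βb : ℝ, 0 < β → 0 < βb →
      Integrable (fun p : ℝ × ℝ => Real.exp (-β * p.1 - βb * p.2)) μ)
    (hmod : ∀ β βb : ℝ, 0 < β → 0 < βb →
      Ztil μ β βb = Kker A β βb * Ztil μ (4 * Real.pi ^ 2 / β) (4 * Real.pi ^ 2 / βb))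
    (β₀ : ℝ) (hβ₀ : 0 < β₀) (hstar : ℝ) :
    ∃ C : ℝ,
      (∀ β βb : ℝ, 0 < βb → βb ≤ β₀ → β₀ ≤ β →
        (∫ p in {p : ℝ × ℝ | hstar ≤ p.1}, Real.exp (-β * p.1 - βb * p.2) ∂μ) ≤
          C * βb ^ (-(1 : ℝ) / 2) * Real.exp (4 * Real.pi ^ 2 * A / βb - hstar * β)) ∧
      (∀ β βb : ℝ, 0 < β → β ≤ β₀ → β₀ ≤ βb →
        (∫ p in {p : ℝ × ℝ | hstar ≤ p.2}, Real.exp (-β * p.1 - βb * p.2) ∂μ) ≤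
          C * β ^ (-(1 : ℝ) / 2) * Real.exp (4 * Real.pi ^ 2 * A / β - hstar * βb)) := by
  have hpos : ∀ᵐ p ∂μ, 0 ≤ p.1 ∧ 0 ≤ p.2 :=
    (ae_le_fst_and_le_snd hsupp).mono fun p hp => ⟨hT.le.trans hp.1, hT.le.trans hp.2⟩
  obtain ⟨C₁, hC₁⟩ :=
    exists_setIntegral_fst_ge_le hA.le (hpos.mono fun p hp => hp.2) hint hmod hβ₀ hstar
  have hpos_swap : ∀ᵐ p ∂μ.map Prod.swap, 0 ≤ p.2 :=
    (ae_map_iff measurable_swap.aemeasurable (measurableSet_le measurable_const measurable_snd)).2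
      (hpos.mono fun p hp => hp.1)
  obtain ⟨C₂, hC₂⟩ := exists_setIntegral_fst_ge_le hA.le hpos_swap
    (fun β βb hβ hβb => integrable_exp_map_swap (hint βb β hβb hβ))
    (fun β βb hβ hβb => by rw [Ztil_map_swap, Ztil_map_swap, hmod βb β hβb hβ, Kker_comm])
    hβ₀ hstar
  refine ⟨max C₁ C₂, fun β βb hβb hβbβ₀ hβ₀β => (hC₁ β βb hβb hβbβ₀ hβ₀β).trans ?_,
    fun β βb hβ hββ₀ hβ₀βb => ?_⟩
  · gcongr
    exact le_max_left _ _
  · rw [setIntegral_snd_ge_eq_map_swap]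
    refine (hC₂ βb β hβ hββ₀ hβ₀βb).trans ?_
    gcongr
    exact le_max_right _ _

/-- Lemma 3.3, key lemma: bounds on the partial integrals of the
reduced partition function over `h ≥ h*` and over `h̄ ≥ h*`. -/
theorem stmt12 (A T : ℝ) (hA : 0 < A) (hT : 0 < T) (μ : Measure (ℝ × ℝ))
    (hsupp : μ {p : ℝ × ℝ | p.1 < T ∨ p.2 < T} = 0)
    (hint : ∀ β βb : ℝ, 0 < β → 0 < βb →
      Integrable (fun p : ℝ × ℝ => Real.exp (-β * p.1 - βb * p.2)) μ)
    (hmod : ∀ β βb : ℝ, 0 < β → 0 < βb →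
      Ztil μ β βb = Kker A β βb * Ztil μ (4 * Real.pi ^ 2 / β) (4 * Real.pi ^ 2 / βb))
    (β₀ : ℝ) (hβ₀ : 0 < β₀) (hstar : ℝ) (hhstar : 0 ≤ hstar) :
    ∃ C : ℝ,
      (∀ β βb : ℝ, 0 < βb → βb ≤ β₀ → β₀ ≤ β →
        (∫ p in {p : ℝ × ℝ | hstar ≤ p.1}, Real.exp (-β * p.1 - βb * p.2) ∂μ) ≤
          C * βb ^ (-(1 : ℝ) / 2) * Real.exp (4 * Real.pi ^ 2 * A / βb - hstar * β)) ∧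
      (∀ β βb : ℝ, 0 < β → β ≤ β₀ → β₀ ≤ βb →
        (∫ p in {p : ℝ × ℝ | hstar ≤ p.2}, Real.exp (-β * p.1 - βb * p.2) ∂μ) ≤
          C * β ^ (-(1 : ℝ) / 2) * Real.exp (4 * Real.pi ^ 2 * A / β - hstar * βb)) :=
  stmt12_general A T hA hT μ hsupp hint hmod β₀ hβ₀ hstar
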